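/- arXiv:2306.11152 — 3 statements merged into one kernel-verified Lean document; each statement's English description precedes it below -/
import Mathlib

section
/- Let W be a symmetric positive definite M×M real matrix and b ∈ ℝ^M a nonzero vector. Set d₁ = W⁻¹b and d₂ = W⁻¹b − ((bᵀW⁻²b)/(bᵀW⁻³b)) · W⁻²b, and assume d₂ ≠ 0. Then d₂ maximizes the Fisher criterion R(d) = (dᵀb)²/(dᵀW d) over all nonzero vectors d orthogonal to d₁: for every nonzero d ∈ ℝ^M with dᵀd₁ = 0, one has R(d) ≤ R(d₂). -/
/-!
Put `u = W⁻¹ b` and `c = bᵀW⁻²b / bᵀW⁻³b`. Then `W d₂ = b - c u`, and `c` is exactly the constant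
that makes `d₂ ⊥ u`. Hence every `d ⊥ u` has `dᵀb = dᵀW d₂`, and also `d₂ᵀb = d₂ᵀW d₂`, so
`R(d) = (dᵀW d₂)² / dᵀW d ≤ d₂ᵀW d₂ = R(d₂)` by Cauchy–Schwarz for the inner product given by `W`.
-/

open Matrix

namespace Matrix

variable {n R : Type*} [Fintype n]

lemma IsSymm.mulVec_dotProduct [CommSemiring R] {S : Matrix n n R} (hS : S.IsSymm) (x y : n → R) :
    S *ᵥ x ⬝ᵥ y = x ⬝ᵥ S *ᵥ y := by
  rw [dotProduct_mulVec, ← mulVec_transpose, hS.eq]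

variable [DecidableEq n]

section LinearOrderedField

variable [Field R] [LinearOrder R] [IsStrictOrderedRing R] [StarRing R] [TrivialStar R]

lemma PosSemidef.sq_dotProduct_mulVec_le {A : Matrix n n R} (hA : A.PosSemidef) (x y : n → R) :
    (x ⬝ᵥ A *ᵥ y) ^ 2 ≤ (x ⬝ᵥ A *ᵥ x) * (y ⬝ᵥ A *ᵥ y) := by
  have hsymm : A.IsSymm := isHermitian_iff_isSymm.mp hA.isHermitian
  simpa only [toLinearMap₂'_apply'] using
    LinearMap.BilinForm.apply_sq_le_of_symm (toLinearMap₂' R A)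
      (fun z => by simpa only [toLinearMap₂'_apply', star_trivial] using hA.dotProduct_mulVec_nonneg z)
      ⟨fun z w => by
        rw [toLinearMap₂'_apply', toLinearMap₂'_apply', RingHom.id_apply, dotProduct_comm,
          hsymm.mulVec_dotProduct]⟩ x y

lemma PosSemidef.sq_dotProduct_mulVec_div_le {A : Matrix n n R} (hA : A.PosSemidef) (x y : n → R) :
    (x ⬝ᵥ A *ᵥ y) ^ 2 / (x ⬝ᵥ A *ᵥ x) ≤ y ⬝ᵥ A *ᵥ y := by
  have hnonneg (z : n → R) : 0 ≤ z ⬝ᵥ A *ᵥ z := by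
    simpa only [star_trivial] using hA.dotProduct_mulVec_nonneg z
  refine div_le_of_le_mul₀ (hnonneg x) (hnonneg y) ?_
  rw [mul_comm]
  exact hA.sq_dotProduct_mulVec_le x y

def fisherCriterion (W : Matrix n n R) (b d : n → R) : R :=
  (d ⬝ᵥ b) ^ 2 / (d ⬝ᵥ W *ᵥ d)

theorem PosSemidef.fisherCriterion_le_of_mulVec_eq_sub_smul {W : Matrix n n R} (hW : W.PosSemidef)
    {b u d e : n → R} {c : R} (hWe : W *ᵥ e = b - c • u) (heu : e ⬝ᵥ u = 0) (hdu : d ⬝ᵥ u = 0) :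
    fisherCriterion W b d ≤ fisherCriterion W b e := by
  have hdb : d ⬝ᵥ b = d ⬝ᵥ W *ᵥ e := by
    rw [hWe, dotProduct_sub, dotProduct_smul, hdu, smul_zero, sub_zero]
  have heb : e ⬝ᵥ b = e ⬝ᵥ W *ᵥ e := by
    rw [hWe, dotProduct_sub, dotProduct_smul, heu, smul_zero, sub_zero]
  calc fisherCriterion W b d = (d ⬝ᵥ W *ᵥ e) ^ 2 / (d ⬝ᵥ W *ᵥ d) := by rw [fisherCriterion, hdb]
    _ ≤ e ⬝ᵥ W *ᵥ e := hW.sq_dotProduct_mulVec_div_le d e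
    _ = fisherCriterion W b e := by rw [fisherCriterion, heb, sq, mul_self_div_self]

end LinearOrderedField

theorem PosDef.sub_div_smul_sq_mulVec_dotProduct_eq_zero [Field R] [PartialOrder R] [StarRing R]
    [TrivialStar R] {S : Matrix n n R} (hS : S.PosDef) (b : n → R) :
    (S *ᵥ b - (b ⬝ᵥ (S ^ 2 *ᵥ b) / b ⬝ᵥ (S ^ 3 *ᵥ b)) • (S ^ 2 *ᵥ b)) ⬝ᵥ S *ᵥ b = 0 := by
  have hsymm : S.IsSymm := isHermitian_iff_isSymm.mp hS.isHermitian
  set u := S *ᵥ b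
  have h2 : S ^ 2 *ᵥ b = S *ᵥ u := by rw [sq, ← mulVec_mulVec]
  have h3 : S ^ 3 *ᵥ b = S *ᵥ (S *ᵥ u) := by rw [pow_succ', ← mulVec_mulVec, h2]
  have huu : u ⬝ᵥ u = b ⬝ᵥ S *ᵥ u := hsymm.mulVec_dotProduct b u
  have hvu : S *ᵥ u ⬝ᵥ u = b ⬝ᵥ S *ᵥ (S *ᵥ u) := by
    rw [hsymm.mulVec_dotProduct, ← hsymm.mulVec_dotProduct b]
  have hden : b ⬝ᵥ S *ᵥ (S *ᵥ u) = 0 → b ⬝ᵥ S *ᵥ u = 0 := by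
    intro h
    have hu : u = 0 := by
      by_contra hu
      have := hS.dotProduct_mulVec_pos hu
      rw [star_trivial, ← hsymm.mulVec_dotProduct, hvu, h] at this
      exact this.false
    rw [hu, mulVec_zero, dotProduct_zero]
  rw [h2, h3, sub_dotProduct, smul_dotProduct, smul_eq_mul, huu, hvu, div_mul_cancel_of_imp hden,
    sub_self]

end Matrix

theorem second_discriminant_direction_maximizes_general {M : ℕ}
    (W : Matrix (Fin M) (Fin M) ℝ) (hW : W.PosDef)
    (b : Fin M → ℝ)
    (d₁ d₂ : Fin M → ℝ)
    (hd₁ : d₁ = W⁻¹ *ᵥ b)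
    (hd₂ : d₂ = W⁻¹ *ᵥ b -
      ((b ⬝ᵥ (W⁻¹ ^ 2 *ᵥ b)) / (b ⬝ᵥ (W⁻¹ ^ 3 *ᵥ b))) • (W⁻¹ ^ 2 *ᵥ b)) :
    ∀ d : Fin M → ℝ, d ≠ 0 → d ⬝ᵥ d₁ = 0 →
      (d ⬝ᵥ b) ^ 2 / (d ⬝ᵥ (W *ᵥ d)) ≤ (d₂ ⬝ᵥ b) ^ 2 / (d₂ ⬝ᵥ (W *ᵥ d₂)) := by
  intro d _ hd
  have hWW : W * W⁻¹ = 1 := mul_nonsing_inv W ((isUnit_iff_isUnit_det W).mp hW.isUnit)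
  refine hW.posSemidef.fisherCriterion_le_of_mulVec_eq_sub_smul
    (c := b ⬝ᵥ (W⁻¹ ^ 2 *ᵥ b) / b ⬝ᵥ (W⁻¹ ^ 3 *ᵥ b)) ?_ ?_ hd
  · rw [hd₂, hd₁, mulVec_sub, mulVec_smul, mulVec_mulVec, mulVec_mulVec, hWW, one_mulVec, sq,
      ← mul_assoc, hWW, one_mul]
  · rw [hd₂, hd₁]
    exact hW.inv.sub_div_smul_sq_mulVec_dotProduct_eq_zero b

/-- For symmetric positive definite `W` and nonzero `b`, with `d₁ = W⁻¹ b` and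
`d₂ = W⁻¹ b − ((bᵀ W⁻² b)/(bᵀ W⁻³ b)) W⁻² b ≠ 0`, the vector `d₂` maximizes the
Fisher criterion `R(d) = (dᵀ b)²/(dᵀ W d)` over all nonzero `d` orthogonal to `d₁`. -/
theorem second_discriminant_direction_maximizes {M : ℕ}
    (W : Matrix (Fin M) (Fin M) ℝ) (hW : W.PosDef)
    (b : Fin M → ℝ) (hb : b ≠ 0)
    (d₁ d₂ : Fin M → ℝ)
    (hd₁ : d₁ = W⁻¹ *ᵥ b)
    (hd₂ : d₂ = W⁻¹ *ᵥ b -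
      ((b ⬝ᵥ (W⁻¹ ^ 2 *ᵥ b)) / (b ⬝ᵥ (W⁻¹ ^ 3 *ᵥ b))) • (W⁻¹ ^ 2 *ᵥ b))
    (hd₂0 : d₂ ≠ 0) :
    ∀ d : Fin M → ℝ, d ≠ 0 → d ⬝ᵥ d₁ = 0 →
      (d ⬝ᵥ b) ^ 2 / (d ⬝ᵥ (W *ᵥ d)) ≤ (d₂ ⬝ᵥ b) ^ 2 / (d₂ ⬝ᵥ (W *ᵥ d₂)) :=
  second_discriminant_direction_maximizes_general W hW b d₁ d₂ hd₁ hd₂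
end

section
/- Let Y ∈ ℝ^{N×M} have entrywise nonnegative entries, and let K ∈ ℝ^{N×p} and X ∈ ℝ^{p×M} have entrywise strictly positive entries. Define the multiplicatively updated matrix X′ entrywise by X′_{aj} = X_{aj} · (KᵀY)_{aj} / (KᵀK X)_{aj} (all denominators are strictly positive). Then the Frobenius reconstruction objective does not increase: ‖Y − K X′‖_F² ≤ ‖Y − K X‖_F². -/
open Matrix Finset

/-!
Write `f(X) = ‖Y - K X‖²` and `D = X' - X`. Column by column, the update is exactly the choice that turns the
residual gradient `Kᵀ (Y - K X)` into `D ⊙ (KᵀK X) / X`, so expanding the square gives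
`f(X') = f(X) - 2 T + Q` with `T = ∑ (KᵀK X) / X ⊙ D²` and `Q = ∑ⱼ Dⱼᵀ KᵀK Dⱼ`.
The Lee–Seung bound `Q ≤ T` (for a symmetric nonnegative `A` and a positive `x`, the diagonal
matrix `diag ((A x) / x)` dominates `A`) then gives `f(X') ≤ f(X) - T ≤ f(X)`.
-/

theorem dotProduct_mulVec_le_sum_mulVec_div_mul_sq {n : Type*} [Fintype n]
    (A : Matrix n n ℝ) (hA : A.IsSymm) (hA₀ : ∀ a b, 0 ≤ A a b)
    (x : n → ℝ) (hx : ∀ a, 0 < x a) (d : n → ℝ) :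
    d ⬝ᵥ (A *ᵥ d) ≤ ∑ a, (A *ᵥ x) a / x a * d a ^ 2 := by
  have amgm : ∀ a b, d a * d b ≤ (x b / x a * d a ^ 2 + x a / x b * d b ^ 2) / 2 := by
    intro a b
    have hxa := hx a
    have hxb := hx b
    rw [div_mul_eq_mul_div, div_mul_eq_mul_div, div_add_div _ _ hxa.ne' hxb.ne',
      div_div, le_div_iff₀ (by positivity)]
    nlinarith [sq_nonneg (x b * d a - x a * d b), mul_pos hxa hxb]
  have swap : ∑ a, ∑ b, A a b * (x a / x b * d b ^ 2)
      = ∑ a, ∑ b, A a b * (x b / x a * d a ^ 2) := by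
    rw [sum_comm]
    simp only [hA.apply]
  calc d ⬝ᵥ (A *ᵥ d) = ∑ a, ∑ b, A a b * (d a * d b) := by
        simp only [dotProduct, mulVec, mul_sum]
        exact sum_congr rfl fun a _ => sum_congr rfl fun b _ => by ring
    _ ≤ ∑ a, ∑ b, A a b * ((x b / x a * d a ^ 2 + x a / x b * d b ^ 2) / 2) := by
        gcongr with a _ b _
        exacts [hA₀ a b, amgm a b]
    _ = ∑ a, ∑ b, A a b * (x b / x a * d a ^ 2) := by
        simp only [mul_add, add_div, mul_div_assoc', sum_add_distrib, ← sum_div, swap]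
        ring
    _ = ∑ a, (A *ᵥ x) a / x a * d a ^ 2 := by
        simp only [mulVec, dotProduct, sum_mul, sum_div]
        exact sum_congr rfl fun a _ => sum_congr rfl fun b _ => by ring

theorem sub_mulVec_dotProduct_self {R m n : Type*} [CommRing R] [Fintype m] [Fintype n]
    (r : m → R) (K : Matrix m n R) (d : n → R) :
    (r - K *ᵥ d) ⬝ᵥ (r - K *ᵥ d)
      = r ⬝ᵥ r - 2 * ((Kᵀ *ᵥ r) ⬝ᵥ d) + d ⬝ᵥ ((Kᵀ * K) *ᵥ d) := by
  have cross : r ⬝ᵥ (K *ᵥ d) = (Kᵀ *ᵥ r) ⬝ᵥ d := by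
    rw [dotProduct_mulVec, mulVec_transpose]
  have square : (K *ᵥ d) ⬝ᵥ (K *ᵥ d) = d ⬝ᵥ ((Kᵀ * K) *ᵥ d) := by
    rw [dotProduct_mulVec, ← mulVec_transpose, ← mulVec_mulVec, dotProduct_comm]
  simp only [sub_dotProduct, dotProduct_sub, dotProduct_comm (K *ᵥ d) r, cross, square]
  ring

theorem residual_dotProduct_self_le_of_multiplicative_update
    {m n : Type*} [Fintype m] [Fintype n] (y : m → ℝ) (K : Matrix m n ℝ) (hK : ∀ i a, 0 ≤ K i a)
    (x : n → ℝ) (hx : ∀ a, 0 < x a) (hden : ∀ a, 0 < ((Kᵀ * K) *ᵥ x) a)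
    (x' : n → ℝ) (hx' : ∀ a, x' a = x a * (Kᵀ *ᵥ y) a / ((Kᵀ * K) *ᵥ x) a) :
    (y - K *ᵥ x') ⬝ᵥ (y - K *ᵥ x') ≤ (y - K *ᵥ x) ⬝ᵥ (y - K *ᵥ x) := by
  set A := Kᵀ * K with hA
  set d := x' - x
  set T := ∑ a, (A *ᵥ x) a / x a * d a ^ 2
  have residual : Kᵀ *ᵥ (y - K *ᵥ x) = fun a => (A *ᵥ x) a / x a * d a := by
    ext a
    have hxa := (hx a).ne'
    have hda := (hden a).ne'
    rw [mulVec_sub, mulVec_mulVec, ← hA, Pi.sub_apply, show d a = x' a - x a from rfl, hx' a]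
    field_simp
  have gain : (Kᵀ *ᵥ (y - K *ᵥ x)) ⬝ᵥ d = T := by
    rw [residual]
    exact sum_congr rfl fun a _ => by ring
  have penalty : d ⬝ᵥ (A *ᵥ d) ≤ T :=
    dotProduct_mulVec_le_sum_mulVec_div_mul_sq A (by simp [A, IsSymm, transpose_mul])
      (fun a b => sum_nonneg fun i _ => mul_nonneg (hK i a) (hK i b)) x hx d
  have gain_nonneg : 0 ≤ T :=
    sum_nonneg fun a _ => mul_nonneg (div_nonneg (hden a).le (hx a).le) (sq_nonneg _)
  have step : y - K *ᵥ x' = (y - K *ᵥ x) - K *ᵥ d := by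
    rw [mulVec_sub]
    abel
  rw [step, sub_mulVec_dotProduct_self, gain]
  linarith

theorem nmf_update_X_decreases_general {N M p : ℕ}
    (Y : Matrix (Fin N) (Fin M) ℝ)
    (K : Matrix (Fin N) (Fin p) ℝ) (hK : ∀ i a, 0 < K i a)
    (X : Matrix (Fin p) (Fin M) ℝ) (hX : ∀ a j, 0 < X a j)
    (hden : ∀ a j, 0 < (Kᵀ * K * X) a j)
    (X' : Matrix (Fin p) (Fin M) ℝ)
    (hX' : ∀ a j, X' a j = X a j * (Kᵀ * Y) a j / (Kᵀ * K * X) a j) :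
    ∑ i, ∑ j, (Y i j - (K * X') i j) ^ 2 ≤ ∑ i, ∑ j, (Y i j - (K * X) i j) ^ 2 := by
  rw [sum_comm, sum_comm (f := fun i j => (Y i j - (K * X) i j) ^ 2)]
  refine sum_le_sum fun j _ => ?_
  simp only [sq]
  exact residual_dotProduct_self_le_of_multiplicative_update (Yᵀ j) K (fun i a => (hK i a).le)
    (Xᵀ j) (fun a => hX a j) (fun a => hden a j) (X'ᵀ j) (fun a => hX' a j)

/-- Lee–Seung multiplicative update for `X` in NMF: if `Y` is entrywise nonnegative and
`K`, `X` are entrywise strictly positive with all denominators `(KᵀK X)_{aj}` strictly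
positive, then the update `X′_{aj} = X_{aj} (KᵀY)_{aj} / (KᵀK X)_{aj}` does not increase
the Frobenius reconstruction objective `‖Y − K X‖_F²`. -/
theorem nmf_update_X_decreases {N M p : ℕ}
    (Y : Matrix (Fin N) (Fin M) ℝ) (hY : ∀ i j, 0 ≤ Y i j)
    (K : Matrix (Fin N) (Fin p) ℝ) (hK : ∀ i a, 0 < K i a)
    (X : Matrix (Fin p) (Fin M) ℝ) (hX : ∀ a j, 0 < X a j)
    (hden : ∀ a j, 0 < (Kᵀ * K * X) a j)
    (X' : Matrix (Fin p) (Fin M) ℝ)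
    (hX' : ∀ a j, X' a j = X a j * (Kᵀ * Y) a j / (Kᵀ * K * X) a j) :
    ∑ i, ∑ j, (Y i j - (K * X') i j) ^ 2 ≤ ∑ i, ∑ j, (Y i j - (K * X) i j) ^ 2 :=
  nmf_update_X_decreases_general Y K hK X hX hden X' hX'
end

section
/- Let Y ∈ ℝ^{N×M} have entrywise nonnegative entries, and let K ∈ ℝ^{N×p} and X ∈ ℝ^{p×M} have entrywise strictly positive entries. Define the multiplicatively updated matrix K′ entrywise by K′_{ia} = K_{ia} · (Y Xᵀ)_{ia} / (K X Xᵀ)_{ia} (all denominators are strictly positive). Then the Frobenius reconstruction objective does not increase: ‖Y − K′ X‖_F² ≤ ‖Y − K X‖_F². -/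
/-!
Fix a row `y` of `Y` and the corresponding row `k` of `K`, and put `G = X Xᵀ`, `b = X y`,
`d = G k`. For a step `δ` the row objective is `f(k + δ) = f(k) - 2 δ ⬝ (b - d) + δ ⬝ G δ`.
Since `G` is symmetric with nonnegative entries and `k > 0`, the weighted AM-GM inequality
`2 v_a v_c ≤ v_a² k_c / k_a + v_c² k_a / k_c` gives `δ ⬝ G δ ≤ ∑ δ_a² d_a / k_a` (Lee and Seung's
auxiliary function). For the multiplicative step `δ_a = k_a (b_a - d_a) / d_a` this bound turns
the change of the objective into `-∑ k_a (b_a - d_a)² / d_a ≤ 0`.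
-/

open Matrix

theorem sum_sq_sub_add_vecMul {R ι κ : Type*} [CommRing R] [Fintype ι] [Fintype κ]
    (y : κ → R) (X : Matrix ι κ R) (k δ : ι → R) :
    ∑ j, (y j - ((k + δ) ᵥ* X) j) ^ 2 = ∑ j, (y j - (k ᵥ* X) j) ^ 2
      - 2 * (δ ⬝ᵥ (X *ᵥ y - k ᵥ* (X * Xᵀ))) + δ ⬝ᵥ ((X * Xᵀ) *ᵥ δ) := by
  have hcross : δ ⬝ᵥ (X *ᵥ y - k ᵥ* (X * Xᵀ)) = ∑ j, (δ ᵥ* X) j * (y j - (k ᵥ* X) j) := by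
    rw [← vecMul_vecMul, vecMul_transpose, ← mulVec_sub, dotProduct_mulVec]; rfl
  have hquad : δ ⬝ᵥ ((X * Xᵀ) *ᵥ δ) = ∑ j, (δ ᵥ* X) j ^ 2 := by
    rw [← mulVec_mulVec, dotProduct_mulVec, mulVec_transpose]
    simp only [dotProduct, sq]
  rw [hcross, hquad, Finset.mul_sum, ← Finset.sum_sub_distrib, ← Finset.sum_add_distrib]
  refine Finset.sum_congr rfl fun j _ => ?_
  rw [add_vecMul, Pi.add_apply]
  ring

section OrderedField

variable {R : Type*} [Field R] [LinearOrder R] [IsStrictOrderedRing R]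

theorem two_mul_mul_le_sq_mul_div_add {x y a b : R} (ha : 0 < a) (hb : 0 < b) :
    2 * (x * y) ≤ x ^ 2 * b / a + y ^ 2 * a / b := by
  rw [div_add_div _ _ ha.ne' hb.ne', le_div_iff₀ (by positivity)]
  nlinarith [sq_nonneg (x * b - y * a)]

theorem sq_mul_div_le_two_mul_mul_sub {k b d : R} (hk : 0 < k) (hd : 0 < d) :
    (k * b / d - k) ^ 2 * d / k ≤ 2 * (k * b / d - k) * (b - d) := by
  have hgap : (k * b / d - k) ^ 2 * d / k = k * (b - d) ^ 2 / d := by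
    field_simp
  have hstep : 2 * (k * b / d - k) * (b - d) = 2 * (k * (b - d) ^ 2 / d) := by
    field_simp
  have : 0 ≤ k * (b - d) ^ 2 / d := by positivity
  linarith

variable {ι κ : Type*} [Fintype ι] [Fintype κ]

theorem dotProduct_mulVec_le_sum_sq_mul_div {G : Matrix ι ι R} (hGs : Gᵀ = G)
    (hG : ∀ a b, 0 ≤ G a b) {k : ι → R} (hk : ∀ a, 0 < k a) (v : ι → R) :
    v ⬝ᵥ (G *ᵥ v) ≤ ∑ a, v a ^ 2 * (G *ᵥ k) a / k a := by
  have hswap : ∑ a, ∑ b, G a b * (v b ^ 2 * k a / k b)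
      = ∑ a, ∑ b, G a b * (v a ^ 2 * k b / k a) := by
    rw [Finset.sum_comm]
    refine Finset.sum_congr rfl fun a _ => Finset.sum_congr rfl fun b _ => ?_
    rw [← congrFun (congrFun hGs a) b, transpose_apply]
  have hrhs : ∑ a, v a ^ 2 * (G *ᵥ k) a / k a = ∑ a, ∑ b, G a b * (v a ^ 2 * k b / k a) := by
    refine Finset.sum_congr rfl fun a _ => ?_
    simp only [mulVec, dotProduct, Finset.mul_sum, Finset.sum_div]
    exact Finset.sum_congr rfl fun b _ => by ring
  have hAMGM : 2 * (v ⬝ᵥ (G *ᵥ v)) ≤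
      ∑ a, ∑ b, G a b * (v a ^ 2 * k b / k a) + ∑ a, ∑ b, G a b * (v b ^ 2 * k a / k b) := by
    simp only [mulVec, dotProduct, Finset.mul_sum, ← Finset.sum_add_distrib]
    refine Finset.sum_le_sum fun a _ => Finset.sum_le_sum fun b _ => ?_
    calc 2 * (v a * (G a b * v b)) = G a b * (2 * (v a * v b)) := by ring
      _ ≤ G a b * (v a ^ 2 * k b / k a + v b ^ 2 * k a / k b) :=
        mul_le_mul_of_nonneg_left (two_mul_mul_le_sq_mul_div_add (hk a) (hk b)) (hG a b)
      _ = _ := by ring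
  rw [hswap] at hAMGM
  linarith

def leeSeungUpdate (y : κ → R) (X : Matrix ι κ R) (k : ι → R) : ι → R :=
  fun a => k a * (X *ᵥ y) a / (k ᵥ* (X * Xᵀ)) a

theorem sum_sq_sub_leeSeungUpdate_vecMul_le (y : κ → R) {X : Matrix ι κ R}
    (hX : ∀ a j, 0 ≤ X a j) {k : ι → R} (hk : ∀ a, 0 < k a)
    (hd : ∀ a, 0 < (k ᵥ* (X * Xᵀ)) a) :
    ∑ j, (y j - (leeSeungUpdate y X k ᵥ* X) j) ^ 2 ≤ ∑ j, (y j - (k ᵥ* X) j) ^ 2 := by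
  set δ := leeSeungUpdate y X k - k
  have hGs : (X * Xᵀ)ᵀ = X * Xᵀ := by rw [transpose_mul, transpose_transpose]
  have hG : ∀ a b, 0 ≤ (X * Xᵀ) a b := fun a b =>
    Finset.sum_nonneg fun j _ => mul_nonneg (hX a j) (hX b j)
  have hGk : (X * Xᵀ) *ᵥ k = k ᵥ* (X * Xᵀ) := by rw [← mulVec_transpose, hGs]
  have hmaj := dotProduct_mulVec_le_sum_sq_mul_div hGs hG hk δ
  rw [hGk] at hmaj
  have hgain : ∑ a, δ a ^ 2 * (k ᵥ* (X * Xᵀ)) a / k a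
      ≤ 2 * (δ ⬝ᵥ (X *ᵥ y - k ᵥ* (X * Xᵀ))) := by
    rw [dotProduct, Finset.mul_sum]
    refine Finset.sum_le_sum fun a _ => ?_
    simp only [δ, Pi.sub_apply, leeSeungUpdate, ← mul_assoc]
    exact sq_mul_div_le_two_mul_mul_sub (hk a) (hd a)
  rw [← add_sub_cancel k (leeSeungUpdate y X k), sum_sq_sub_add_vecMul]
  linarith

end OrderedField

theorem nmf_update_K_decreases_general {N M p : ℕ}
    (Y : Matrix (Fin N) (Fin M) ℝ)
    (K : Matrix (Fin N) (Fin p) ℝ) (hK : ∀ i a, 0 < K i a)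
    (X : Matrix (Fin p) (Fin M) ℝ) (hX : ∀ a j, 0 < X a j)
    (hden : ∀ i a, 0 < (K * X * Xᵀ) i a)
    (K' : Matrix (Fin N) (Fin p) ℝ)
    (hK' : ∀ i a, K' i a = K i a * (Y * Xᵀ) i a / (K * X * Xᵀ) i a) :
    ∑ i, ∑ j, (Y i j - (K' * X) i j) ^ 2 ≤ ∑ i, ∑ j, (Y i j - (K * X) i j) ^ 2 := by
  have hrow : ∀ i, K' i = leeSeungUpdate (Y i) X (K i) := fun i => funext fun a => by
    rw [hK', leeSeungUpdate, ← vecMul_transpose, Matrix.mul_assoc]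
    rfl
  refine Finset.sum_le_sum fun i _ => ?_
  rw [Matrix.mul_assoc] at hden
  have hrow_le := sum_sq_sub_leeSeungUpdate_vecMul_le (Y i) (fun a j => (hX a j).le) (hK i) (hden i)
  rwa [← hrow] at hrow_le

/-- Lee–Seung multiplicative update for `K` in NMF: if `Y` is entrywise nonnegative and
`K`, `X` are entrywise strictly positive with all denominators `(K X Xᵀ)_{ia}` strictly
positive, then the update `K′_{ia} = K_{ia} (Y Xᵀ)_{ia} / (K X Xᵀ)_{ia}` does not increase
the Frobenius reconstruction objective `‖Y − K X‖_F²`. -/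
theorem nmf_update_K_decreases {N M p : ℕ}
    (Y : Matrix (Fin N) (Fin M) ℝ) (hY : ∀ i j, 0 ≤ Y i j)
    (K : Matrix (Fin N) (Fin p) ℝ) (hK : ∀ i a, 0 < K i a)
    (X : Matrix (Fin p) (Fin M) ℝ) (hX : ∀ a j, 0 < X a j)
    (hden : ∀ i a, 0 < (K * X * Xᵀ) i a)
    (K' : Matrix (Fin N) (Fin p) ℝ)
    (hK' : ∀ i a, K' i a = K i a * (Y * Xᵀ) i a / (K * X * Xᵀ) i a) :
    ∑ i, ∑ j, (Y i j - (K' * X) i j) ^ 2 ≤ ∑ i, ∑ j, (Y i j - (K * X) i j) ^ 2 :=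
  nmf_update_K_decreases_general Y K hK X hX hden K' hK'
end
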